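/- Let H, K, E be Hilbert spaces and V: K → H ⊗ E an isometry. If the map f: B(H) → B(K), f(a) = V† (a ⊗ id_E) V, is a unital *-homomorphism and the representation (E, V) is minimal in the sense that the closed span of {(a ⊗ id_E)V(ξ) : a ∈ B(H), ξ ∈ K} is all of H ⊗ E, then V is unitary. -/

import Mathlib

open scoped ComplexOrder
open ContinuousLinearMap

noncomputable section

/-- A realisation of the Hilbert space tensor product `H ⊗ E` as a Hilbert space `T`:
a bilinear map `tmul` with total span dense, whose inner products multiply, together with
the operator tensor product `map a b = a ⊗ b` characterised on elementary tensors. -/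
structure HilbertTensor (H E T : Type*)
    [NormedAddCommGroup H] [InnerProductSpace ℂ H] [CompleteSpace H]
    [NormedAddCommGroup E] [InnerProductSpace ℂ E] [CompleteSpace E]
    [NormedAddCommGroup T] [InnerProductSpace ℂ T] [CompleteSpace T] where
  tmul : H →L[ℂ] E →L[ℂ] T
  inner_tmul : ∀ (h h' : H) (e e' : E),
    (inner ℂ (tmul h e) (tmul h' e') : ℂ) = (inner ℂ h h' : ℂ) * (inner ℂ e e' : ℂ)
  dense_span :
    (Submodule.span ℂ (Set.range fun p : H × E => tmul p.1 p.2)).topologicalClosure = ⊤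
  map : (H →L[ℂ] H) → (E →L[ℂ] E) → (T →L[ℂ] T)
  map_tmul : ∀ (a : H →L[ℂ] H) (b : E →L[ℂ] E) (h : H) (e : E),
    map a b (tmul h e) = tmul (a h) (b e)

/-- A map `f : B(H) → B(K)` is completely positive if all the block quadratic forms
`∑ᵢⱼ ⟪ξᵢ, f(aᵢ* aⱼ) ξⱼ⟫` are nonnegative. -/
def IsCompletelyPositive {H K : Type*}
    [NormedAddCommGroup H] [InnerProductSpace ℂ H] [CompleteSpace H]
    [NormedAddCommGroup K] [InnerProductSpace ℂ K] [CompleteSpace K]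
    (f : (H →L[ℂ] H) → (K →L[ℂ] K)) : Prop :=
  ∀ (n : ℕ) (a : Fin n → (H →L[ℂ] H)) (ξ : Fin n → K),
    0 ≤ ∑ i, ∑ j, (inner ℂ (ξ i) ((f (star (a i) * a j)) (ξ j)) : ℂ)

/-!
For `W = (a ⊗ 1) V`, multiplicativity and *-preservation of `f` give
`W† W = f (a* a) = f(a)* f(a) = (V† W)† (V† W)`, i.e. `‖V† W ξ‖ = ‖W ξ‖`. Since `V V†` is the
projection onto the range of the isometry `V`, every `(a ⊗ 1) V ξ` lies in that range, so
`V V† = 1` on a set with dense span.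
-/

section Adjoint

variable {𝕜 X K T : Type*} [RCLike 𝕜]
  [NormedAddCommGroup X] [InnerProductSpace 𝕜 X] [CompleteSpace X]
  [NormedAddCommGroup K] [InnerProductSpace 𝕜 K] [CompleteSpace K]
  [NormedAddCommGroup T] [InnerProductSpace 𝕜 T] [CompleteSpace T]

theorem ContinuousLinearMap.isStarProjection_comp_adjoint {V : K →L[𝕜] T}
    (hV : adjoint V ∘L V = 1) : IsStarProjection (V ∘L adjoint V) where
  isIdempotentElem := by
    rw [IsIdempotentElem, mul_def, comp_assoc, ← comp_assoc (adjoint V), hV, one_def, id_comp]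
  isSelfAdjoint := by
    rw [IsSelfAdjoint, star_eq_adjoint, adjoint_comp, adjoint_adjoint]

theorem ContinuousLinearMap.comp_adjoint_comp_eq_self {V : K →L[𝕜] T} (hV : adjoint V ∘L V = 1)
    {W : X →L[𝕜] T} (hW : adjoint W ∘L W = adjoint (adjoint V ∘L W) ∘L (adjoint V ∘L W)) :
    V ∘L adjoint V ∘L W = W := by
  -- `Q` projects onto the orthogonal complement of the range of `V`, so `hW` says `Q W = 0`.
  set Q : T →L[𝕜] T := 1 - V ∘L adjoint V
  have hQ : IsStarProjection Q := (isStarProjection_comp_adjoint hV).one_sub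
  have hQW : adjoint (Q ∘L W) ∘L (Q ∘L W) = 0 := by
    calc adjoint (Q ∘L W) ∘L (Q ∘L W) = adjoint W ∘L (star Q * Q) ∘L W := by
          rw [adjoint_comp, star_eq_adjoint, mul_def]; rfl
      _ = adjoint W ∘L W - adjoint (adjoint V ∘L W) ∘L (adjoint V ∘L W) := by
          rw [hQ.isSelfAdjoint.star_eq, hQ.isIdempotentElem.eq, adjoint_comp, adjoint_adjoint]
          ext x; simp [Q]
      _ = 0 := by rw [hW, sub_self]
  rw [adjoint_comp_self_eq_zero_iff] at hQW
  calc V ∘L adjoint V ∘L W = W - Q ∘L W := by ext x; simp [Q]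
    _ = W := by rw [hQW, sub_zero]

end Adjoint

namespace HilbertTensor

variable {H E T : Type*}
  [NormedAddCommGroup H] [InnerProductSpace ℂ H] [CompleteSpace H]
  [NormedAddCommGroup E] [InnerProductSpace ℂ E] [CompleteSpace E]
  [NormedAddCommGroup T] [InnerProductSpace ℂ T] [CompleteSpace T]
  (τ : HilbertTensor H E T)

theorem ext_tmul {M : Type*} [NormedAddCommGroup M] [NormedSpace ℂ M]
    {A B : T →L[ℂ] M} (hAB : ∀ h e, A (τ.tmul h e) = B (τ.tmul h e)) : A = B := by
  refine ext_on (Submodule.dense_iff_topologicalClosure_eq_top.mpr τ.dense_span) ?_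
  rintro _ ⟨p, rfl⟩
  exact hAB p.1 p.2

theorem ext_inner_tmul {x y : T}
    (hxy : ∀ h e, inner ℂ x (τ.tmul h e) = inner ℂ y (τ.tmul h e)) : x = y := by
  have : innerSL ℂ x = innerSL ℂ y := τ.ext_tmul hxy
  exact ext_inner_right ℂ fun v => congrArg (· v) this

theorem adjoint_map_one (a : H →L[ℂ] H) : adjoint (τ.map a 1) = τ.map (adjoint a) 1 := by
  refine τ.ext_tmul fun h e => τ.ext_inner_tmul fun h' e' => ?_
  rw [adjoint_inner_left, τ.map_tmul, τ.map_tmul, τ.inner_tmul, τ.inner_tmul, adjoint_inner_left]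
  rfl

theorem map_one_comp_map_one (a b : H →L[ℂ] H) :
    τ.map a 1 ∘L τ.map b 1 = τ.map (a * b) 1 :=
  τ.ext_tmul fun h e => by simp [τ.map_tmul]

end HilbertTensor

theorem minimal_star_hom_representation_unitary_general
    {H K E T : Type*}
    [NormedAddCommGroup H] [InnerProductSpace ℂ H] [CompleteSpace H]
    [NormedAddCommGroup K] [InnerProductSpace ℂ K] [CompleteSpace K]
    [NormedAddCommGroup E] [InnerProductSpace ℂ E] [CompleteSpace E]
    [NormedAddCommGroup T] [InnerProductSpace ℂ T] [CompleteSpace T]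
    (τ : HilbertTensor H E T) (V : K →L[ℂ] T)
    (hisometry : adjoint V ∘L V = 1)
    (f : (H →L[ℂ] H) → (K →L[ℂ] K))
    (hf : ∀ a, f a = adjoint V ∘L τ.map a 1 ∘L V)
    (hmul : ∀ a b, f (a * b) = f a * f b)
    (hstar : ∀ a, f (star a) = star (f a))
    (hmin : (Submodule.span ℂ
        {z : T | ∃ (a : H →L[ℂ] H) (ξ : K), z = τ.map a 1 (V ξ)}).topologicalClosure = ⊤) :
    adjoint V ∘L V = 1 ∧ V ∘L adjoint V = 1 := by
  refine ⟨hisometry, ext_on (Submodule.dense_iff_topologicalClosure_eq_top.mpr hmin) ?_⟩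
  rintro _ ⟨a, ξ, rfl⟩
  have hfa : f a = adjoint V ∘L (τ.map a 1 ∘L V) := hf a
  have hW : adjoint (τ.map a 1 ∘L V) ∘L (τ.map a 1 ∘L V) = adjoint (f a) ∘L f a :=
    calc adjoint (τ.map a 1 ∘L V) ∘L (τ.map a 1 ∘L V) = f (star a * a) := by
          rw [hf, adjoint_comp, τ.adjoint_map_one, ← τ.map_one_comp_map_one, star_eq_adjoint]
          rfl
      _ = adjoint (f a) ∘L f a := by rw [hmul, hstar, star_eq_adjoint]; rfl
  rw [hfa] at hW
  simpa using congrArg (· ξ) (comp_adjoint_comp_eq_self hisometry hW)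

/-- If `f(a) = V† (a ⊗ id_E) V` is a unital *-homomorphism for an isometry `V`, and the
representation `(E,V)` is minimal (the span of `(a ⊗ id_E) V ξ` is dense in `H ⊗ E`), then
`V` is unitary. -/
theorem minimal_star_hom_representation_unitary
    {H K E T : Type*}
    [NormedAddCommGroup H] [InnerProductSpace ℂ H] [CompleteSpace H]
    [NormedAddCommGroup K] [InnerProductSpace ℂ K] [CompleteSpace K]
    [NormedAddCommGroup E] [InnerProductSpace ℂ E] [CompleteSpace E]
    [NormedAddCommGroup T] [InnerProductSpace ℂ T] [CompleteSpace T]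
    (τ : HilbertTensor H E T) (V : K →L[ℂ] T)
    (hisometry : adjoint V ∘L V = 1)
    (f : (H →L[ℂ] H) → (K →L[ℂ] K))
    (hf : ∀ a, f a = adjoint V ∘L τ.map a 1 ∘L V)
    (hunital : f 1 = 1)
    (hmul : ∀ a b, f (a * b) = f a * f b)
    (hstar : ∀ a, f (star a) = star (f a))
    (hmin : (Submodule.span ℂ
        {z : T | ∃ (a : H →L[ℂ] H) (ξ : K), z = τ.map a 1 (V ξ)}).topologicalClosure = ⊤) :
    adjoint V ∘L V = 1 ∧ V ∘L adjoint V = 1 :=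
  minimal_star_hom_representation_unitary_general τ V hisometry f hf hmul hstar hmin

end
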